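/- Assume V ≠ {0} and D is not nilpotent (D^k ≠ 0 for all k ≥ 1). Then in the Lie algebra g = F × V × F with the double-extension bracket: (1) the center of g is C(g) = {(0, v, β) : v ∈ Ker D, β ∈ F}; (2) for every k ≥ 1, the k-th term of the descending central series is g^k = {(0, v, β) : v ∈ Im D^k, β ∈ F}; and (3) for every k ≥ 1, the k-th term of the derived central series is C_k(g) = {(0, v, β) : v ∈ Ker D^k, β ∈ F}. -/

import Mathlib

section

variable {F : Type*} [Field F]

/-- The bracket of the double extension `g = F × V × F` of `V` by `(D, ω)`. -/
def deBracket {V : Type*} [AddCommGroup V] [Module F V]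
    (BV : V →ₗ[F] V →ₗ[F] F) (D : V →ₗ[F] V) :
    (F × V × F) → (F × V × F) → (F × V × F) :=
  fun p q => (0, p.1 • D q.2.1 - q.1 • D p.2.1, BV (D p.2.1) q.2.1)

end

/-- The descending central series of a bracket: `g^0 = g`, `g^k = span [g, g^{k-1}]`. -/
def dcsOf (F : Type*) [Field F] (G : Type*) [AddCommGroup G] [Module F G]
    (br : G → G → G) : ℕ → Submodule F G
  | 0 => ⊤
  | k + 1 => Submodule.span F {z : G | ∃ x : G, ∃ w ∈ dcsOf F G br k, z = br x w}

/-- The derived (upper) central series of a bracket: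
`C_0 = {0}`, `C_k = {x : br x g ⊆ C_{k-1}}`. -/
def ucsOf {G : Type*} (br : G → G → G) [Zero G] : ℕ → Set G
  | 0 => {0}
  | k + 1 => {x : G | ∀ y : G, br x y ∈ ucsOf br k}

/-- for `V ≠ 0` and `D` non-nilpotent, in the double extension
`g = F × V × F`: the center is `{(0, v, β) : v ∈ ker D}`, the descending central series is
`g^k = {(0, v, β) : v ∈ im D^k}`, and the derived central series is
`C_k(g) = {(0, v, β) : v ∈ ker D^k}` for all `k ≥ 1`. -/
theorem stmt17 {F : Type*} [Field F] [CharZero F] {V : Type*}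
    [AddCommGroup V] [Module F V] [Module.Finite F V]
    (hV : ∃ v : V, v ≠ 0)
    (BV : V →ₗ[F] V →ₗ[F] F)
    (hBVsymm : ∀ v w : V, BV v w = BV w v)
    (hBVnondeg : ∀ v : V, (∀ w : V, BV v w = 0) → v = 0)
    (D : V →ₗ[F] V)
    (hDskew : ∀ v w : V, BV (D v) w = -BV v (D w))
    (hDnonnilp : ∀ k : ℕ, 1 ≤ k → (D ^ k : V →ₗ[F] V) ≠ 0) :
    -- (1) the center of g
    (ucsOf (deBracket BV D) 1 = {p : F × V × F | p.1 = 0 ∧ D p.2.1 = 0})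
    -- (2) the descending central series
    ∧ (∀ k : ℕ, 1 ≤ k →
        (dcsOf F (F × V × F) (deBracket BV D) k : Set (F × V × F))
          = {p : F × V × F | p.1 = 0 ∧ ∃ v : V, (D ^ k : V →ₗ[F] V) v = p.2.1})
    -- (3) the derived central series
    ∧ (∀ k : ℕ, 1 ≤ k →
        ucsOf (deBracket BV D) k
          = {p : F × V × F | p.1 = 0 ∧ (D ^ k : V →ₗ[F] V) p.2.1 = 0}) := by
  classical
  set br := deBracket BV D with hbr
  have hDpow : ∀ k : ℕ, ∃ u : V, (D ^ (k+1) : V →ₗ[F] V) u ≠ 0 := by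
    intro k
    by_contra h; push_neg at h
    exact hDnonnilp (k+1) (Nat.le_add_left 1 k) (LinearMap.ext fun u => h u)
  have hDne : ∀ k : ℕ, ∃ v w : V, BV (D v) ((D ^ k : V →ₗ[F] V) w) ≠ 0 := by
    intro k
    obtain ⟨u, hu⟩ := hDpow k
    obtain ⟨w, hw⟩ : ∃ w, BV ((D ^ (k+1) : V →ₗ[F] V) u) w ≠ 0 := by
      by_contra h; push_neg at h; exact hu (hBVnondeg _ h)
    refine ⟨w, u, ?_⟩
    have h1 : (D ^ (k+1) : V →ₗ[F] V) u = D ((D ^ k : V →ₗ[F] V) u) := by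
      rw [pow_succ']; rfl
    rw [hDskew, ← h1, hBVsymm]
    exact neg_ne_zero.mpr hw
  -- (1) the center
  have hcenter : ucsOf br 1 = {p : F × V × F | p.1 = 0 ∧ D p.2.1 = 0} := by
    ext p
    simp only [ucsOf, Set.mem_setOf_eq, Set.mem_singleton_iff]
    constructor
    · intro h
      have h1 := h (1, 0, 0)
      have h2 : D p.2.1 = 0 := by
        have := congrArg (fun q : F × V × F => q.2.1) h1
        simpa [hbr, deBracket] using this
      refine ⟨?_, h2⟩
      obtain ⟨u, hu⟩ := hDpow 0
      have hu' : D u ≠ 0 := by simpa [pow_one] using hu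
      have h3 := congrArg (fun q : F × V × F => q.2.1) (h (0, u, 0))
      simp only [hbr, deBracket] at h3
      simp only [zero_smul, sub_zero] at h3
      rcases smul_eq_zero.mp h3 with h | h
      · exact h
      · exact absurd h hu'
    · rintro ⟨h1, h2⟩ y
      simp [hbr, deBracket, h1, h2, Prod.ext_iff]
  -- (3) the derived central series
  have hucs : ∀ k : ℕ, ucsOf br (k+1)
      = {p : F × V × F | p.1 = 0 ∧ (D ^ (k+1) : V →ₗ[F] V) p.2.1 = 0} := by
    intro k
    induction k with
    | zero => simpa [pow_one] using hcenter
    | succ k ih =>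
      ext p
      have hmem : p ∈ ucsOf br (k+2) ↔ ∀ y, br p y ∈ ucsOf br (k+1) := Iff.rfl
      rw [hmem]
      simp only [ih, Set.mem_setOf_eq]
      have hps : ∀ v : V, (D ^ (k+2) : V →ₗ[F] V) v = (D ^ (k+1) : V →ₗ[F] V) (D v) := by
        intro v; rw [pow_succ]; rfl
      constructor
      · intro h
        have h1 := (h (1, 0, 0)).2
        simp only [hbr, deBracket] at h1
        simp only [map_zero, smul_zero, one_smul, zero_sub, map_neg, neg_eq_zero] at h1
        refine ⟨?_, by rw [hps]; exact h1⟩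
        obtain ⟨u, hu⟩ := hDpow (k+1)
        have h2 := (h (0, u, 0)).2
        simp only [hbr, deBracket] at h2
        simp only [zero_smul, sub_zero, map_smul] at h2
        rcases smul_eq_zero.mp h2 with h | h
        · exact h
        · exact absurd (by rw [hps]; exact h) hu
      · rintro ⟨h1, h2⟩ y
        refine ⟨rfl, ?_⟩
        simp only [hbr, deBracket, h1, zero_smul, zero_sub, map_neg, map_smul, neg_eq_zero]
        rw [← hps, h2, smul_zero]
  -- (2) the descending central series
  have hS : ∀ (k : ℕ) (p : F × V × F),
      p ∈ ((⊥ : Submodule F F).prod ((LinearMap.range (D ^ k : V →ₗ[F] V)).prod ⊤))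
        ↔ p.1 = 0 ∧ ∃ v : V, (D ^ k : V →ₗ[F] V) v = p.2.1 := by
    intro k p
    simp only [Submodule.mem_prod, Submodule.mem_bot, LinearMap.mem_range, Submodule.mem_top, and_true]
  have hdcs : ∀ k : ℕ, dcsOf F (F × V × F) br (k+1)
      = (⊥ : Submodule F F).prod ((LinearMap.range (D ^ (k+1) : V →ₗ[F] V)).prod ⊤) := by
    intro k
    have hps : ∀ (k : ℕ) (v : V),
        (D ^ (k+1) : V →ₗ[F] V) v = D ((D ^ k : V →ₗ[F] V) v) := by
      intro k v; rw [pow_succ']; rfl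
    induction k with
    | zero =>
      apply le_antisymm
      · rw [show dcsOf F (F × V × F) br 1
            = Submodule.span F {z : F × V × F | ∃ x, ∃ w ∈ dcsOf F (F × V × F) br 0, z = br x w}
            from rfl]
        rw [Submodule.span_le]
        rintro z ⟨x, w, -, rfl⟩
        rw [SetLike.mem_coe, hS]
        refine ⟨rfl, x.1 • w.2.1 - w.1 • x.2.1, ?_⟩
        simp [hbr, deBracket, pow_one, map_sub, map_smul]
      · intro p hp
        rw [hS] at hp
        obtain ⟨h1, u, hu⟩ := hp
        have hp' : p = (0, (D ^ 1 : V →ₗ[F] V) u, (0 : F)) + (0, 0, p.2.2) := by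
          rw [hu]; rw [Prod.ext_iff, Prod.ext_iff]
          simp [h1]
        rw [hp']
        apply Submodule.add_mem
        · apply Submodule.subset_span
          refine ⟨(1, 0, 0), (0, u, 0), trivial, ?_⟩
          simp [hbr, deBracket, pow_one, Prod.ext_iff]
        · obtain ⟨v, w, hvw⟩ := hDne 0
          simp only [pow_zero, Module.End.one_apply] at hvw
          set e := BV (D v) w with he
          have heq : (0, (0:V), p.2.2) = (p.2.2 * e⁻¹) • br (0, v, 0) (0, w, 0) := by
            simp only [hbr, deBracket, Prod.smul_mk, smul_zero, zero_smul, sub_zero,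
              smul_eq_mul, Prod.mk.injEq, ← he]
            refine ⟨by ring, by simp, ?_⟩
            rw [mul_assoc, inv_mul_cancel₀ hvw, mul_one]
          rw [heq]
          apply Submodule.smul_mem
          apply Submodule.subset_span
          exact ⟨(0, v, 0), (0, w, 0), trivial, rfl⟩
    | succ k ih =>
      apply le_antisymm
      · rw [show dcsOf F (F × V × F) br (k+2)
            = Submodule.span F {z : F × V × F | ∃ x, ∃ w ∈ dcsOf F (F × V × F) br (k+1), z = br x w}
            from rfl]
        rw [Submodule.span_le]
        rintro z ⟨x, w, hw, rfl⟩
        rw [ih, Submodule.mem_prod] at hw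
        obtain ⟨hw1, hw2⟩ := hw
        rw [Submodule.mem_prod] at hw2
        obtain ⟨u, hu⟩ := hw2.1
        rw [SetLike.mem_coe, hS]
        rw [Submodule.mem_bot] at hw1
        refine ⟨rfl, x.1 • u, ?_⟩
        simp only [hbr, deBracket, map_smul, hps (k+1), hu, hw1, zero_smul, sub_zero]
      · intro p hp
        rw [hS] at hp
        obtain ⟨h1, u, hu⟩ := hp
        have hp' : p = (0, (D ^ (k+2) : V →ₗ[F] V) u, (0 : F)) + (0, 0, p.2.2) := by
          rw [hu]; rw [Prod.ext_iff, Prod.ext_iff]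
          simp [h1]
        rw [hp']
        apply Submodule.add_mem
        · apply Submodule.subset_span
          refine ⟨(1, 0, 0), (0, (D ^ (k+1) : V →ₗ[F] V) u, 0), ?_, ?_⟩
          · rw [ih, Submodule.mem_prod]
            exact ⟨Submodule.mem_bot F |>.mpr rfl, Submodule.mem_prod.mpr ⟨⟨u, rfl⟩, trivial⟩⟩
          · simp [hbr, deBracket, Prod.ext_iff, hps (k+1)]
        · obtain ⟨v, w, hvw⟩ := hDne (k+1)
          set e := BV (D v) ((D ^ (k+1) : V →ₗ[F] V) w) with he
          have heq : (0, (0:V), p.2.2)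
              = (p.2.2 * e⁻¹) • br (0, v, 0) (0, (D ^ (k+1) : V →ₗ[F] V) w, 0) := by
            simp only [hbr, deBracket, Prod.smul_mk, smul_zero, zero_smul, sub_zero,
              smul_eq_mul, Prod.mk.injEq, ← he]
            refine ⟨by ring, by simp, ?_⟩
            rw [mul_assoc, inv_mul_cancel₀ hvw, mul_one]
          rw [heq]
          apply Submodule.smul_mem
          apply Submodule.subset_span
          refine ⟨(0, v, 0), (0, (D ^ (k+1) : V →ₗ[F] V) w, 0), ?_, rfl⟩
          rw [ih, Submodule.mem_prod]
          exact ⟨Submodule.mem_bot F |>.mpr rfl, Submodule.mem_prod.mpr ⟨⟨w, rfl⟩, trivial⟩⟩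
  refine ⟨hcenter, ?_, ?_⟩
  · intro k hk
    obtain ⟨j, rfl⟩ : ∃ j, k = j + 1 := ⟨k - 1, by omega⟩
    ext p
    rw [SetLike.mem_coe, hdcs j, hS]
    rfl
  · intro k hk
    obtain ⟨j, rfl⟩ : ∃ j, k = j + 1 := ⟨k - 1, by omega⟩
    exact hucs j
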